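/- arXiv:2209.10803 — 3 statements merged into one kernel-verified Lean document; each statement's English description precedes it below -/
import Mathlib

section
/- Let X₁ ~ Gamma(α₁, scale θ₁) and X₂ ~ Gamma(α₂, scale θ₂) be independent with 0 < θ₁ ≤ θ₂. If ν(α₁+α₂) ≤ α₁, where ν(α) is the median of Gamma(α,1), then under the GPN criterion with any loss W(a/θ₁) (W(1)=0, W strictly decreasing on (0,1), strictly increasing on (1,∞)), the unbiased estimator δ_UE(X) = X₁/α₁ satisfies GPN(δ_UE, δ_RMLE; θ) > 1/2 for all θ₁ ≤ θ₂, where δ_RMLE(X) = min{X₁/α₁, (X₁+X₂)/(α₁+α₂)}. -/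
open MeasureTheory ProbabilityTheory Set Real
open scoped ENNReal

/-!
Up to a null set, `Ω` splits into three events. On `E = {X₂ ≥ (α₂/α₁) X₁}` the restricted MLE
equals `X₁/α₁`, so the losses tie. Off `E`, the restricted MLE is strictly below `X₁/α₁`; on
`B = {X₁ ≤ α₁θ₁}` both estimates lie in `(0, θ₁]`, so the unbiased one strictly wins, while on
`C = {X₁ > α₁θ₁}` nothing is claimed. Hence the GPN is at least `P(B) + P(E)/2`, which exceeds
`1/2 = (P(E) + P(B) + P(C))/2` as soon as `P(C) < P(B)`.

For the latter, write `X₂ = t X₁` with `t ∈ (0, α₂/α₁)`. For fixed `t` the density of `X₁` is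
proportional to `x^(α₁+α₂-1) e^{-(1/θ₁ + t/θ₂) x}`, a gamma law whose median
`ν(α₁+α₂) / (1/θ₁ + t/θ₂)` is strictly below `α₁θ₁` because `ν(α₁+α₂) ≤ α₁` and `t > 0`.
Integrating over `t` gives `P(C) < P(B)`.
-/

lemma setLIntegral_eq_setLIntegral_comp_mul_left {b : ℝ} (hb : 0 < b) {g : ℝ → ℝ≥0∞}
    (hg : Measurable g) {s : Set ℝ} (hs : MeasurableSet s) :
    ∫⁻ y in s, g y = ∫⁻ t in (b * ·) ⁻¹' s, ENNReal.ofReal b * g (b * t) := by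
  have hvol : (volume : Measure ℝ) = ENNReal.ofReal b • volume.map (b * ·) := by
    rw [Real.map_volume_mul_left hb.ne', smul_smul, abs_of_pos (inv_pos.2 hb),
      ← ENNReal.ofReal_mul hb.le, mul_inv_cancel₀ hb.ne', ENNReal.ofReal_one, one_smul]
  conv_lhs => rw [hvol, Measure.restrict_smul, lintegral_smul_measure,
    setLIntegral_map hs hg (measurable_const_mul b)]
  rw [smul_eq_mul, ← lintegral_const_mul' _ _ ENNReal.ofReal_ne_top]

lemma ae_pos_of_map_eq_withDensity {Ω : Type*} [MeasurableSpace Ω] {μ : Measure Ω}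
    {X : Ω → ℝ} (hX : Measurable X) {ρ : ℝ → ℝ≥0∞} (hρ : ∀ x ≤ 0, ρ x = 0)
    (hlaw : μ.map X = volume.withDensity ρ) : ∀ᵐ ω ∂μ, 0 < X ω := by
  have hnull : μ (X ⁻¹' Iic 0) = 0 := by
    rw [← Measure.map_apply hX measurableSet_Iic, hlaw, withDensity_apply _ measurableSet_Iic,
      setLIntegral_congr_fun measurableSet_Iic hρ, lintegral_zero]
  simp only [ae_iff, not_lt]
  exact hnull

def wedge (A : Set ℝ) (c : ℝ) : Set (ℝ × ℝ) := {p | p.1 ∈ A ∧ 0 < p.2 ∧ p.2 < c * p.1}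

lemma MeasurableSet.wedge {A : Set ℝ} (hA : MeasurableSet A) (c : ℝ) :
    MeasurableSet (wedge A c) :=
  (measurable_fst hA).inter <| (measurableSet_lt measurable_const measurable_snd).inter <|
    measurableSet_lt measurable_snd (measurable_fst.const_mul c)

lemma prod_withDensity_wedge {f g : ℝ → ℝ≥0∞} (hf : Measurable f) (hg : Measurable g)
    {A : Set ℝ} (hA : MeasurableSet A) (hA0 : A ⊆ Ioi 0) (c : ℝ) :
    ((volume.withDensity f).prod (volume.withDensity g)) (wedge A c) =
      ∫⁻ t in Ioo 0 c, ∫⁻ x in A, f x * (ENNReal.ofReal x * g (x * t)) := by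
  have hslice : ∀ x ∈ A, volume.withDensity g (Prod.mk x ⁻¹' wedge A c) =
      ∫⁻ t in Ioo 0 c, ENNReal.ofReal x * g (x * t) := by
    intro x hx
    have hx0 : 0 < x := hA0 hx
    have hpre : Prod.mk x ⁻¹' wedge A c = Ioo 0 (c * x) := by
      ext y
      simp [wedge, hx]
    rw [hpre, withDensity_apply _ measurableSet_Ioo,
      setLIntegral_eq_setLIntegral_comp_mul_left hx0 hg measurableSet_Ioo,
      preimage_const_mul_Ioo₀ _ _ hx0, zero_div, mul_div_cancel_right₀ _ hx0.ne']
  have hslice_out : ∀ x ∉ A, volume.withDensity g (Prod.mk x ⁻¹' wedge A c) = 0 := by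
    intro x hx
    simp [wedge, hx]
  rw [Measure.prod_apply (hA.wedge c), ← lintegral_add_compl _ hA,
    setLIntegral_congr_fun hA.compl hslice_out, lintegral_zero, add_zero,
    setLIntegral_congr_fun hA hslice,
    setLIntegral_withDensity_eq_setLIntegral_mul _ hf
      (Measurable.lintegral_prod_right' (f := fun p : ℝ × ℝ => ENNReal.ofReal p.1 * g (p.1 * p.2))
        (by fun_prop)) hA]
  refine (lintegral_congr fun x => (lintegral_const_mul (f x) ?_).symm).trans
    (lintegral_lintegral_swap ?_)
  · fun_prop
  · exact ((hf.comp measurable_fst).mul (by fun_prop)).aemeasurable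

lemma one_le_measure_add_measure_wedge_add_measure_wedge {Ω : Type*} [MeasurableSpace Ω]
    {μ : Measure Ω} [IsProbabilityMeasure μ] {X₁ X₂ : Ω → ℝ} (h₁ : ∀ᵐ ω ∂μ, 0 < X₁ ω)
    (h₂ : ∀ᵐ ω ∂μ, 0 < X₂ ω) (a c : ℝ) :
    1 ≤ μ {ω | c * X₁ ω ≤ X₂ ω} + (μ ((fun ω => (X₁ ω, X₂ ω)) ⁻¹' wedge (Ioc 0 a) c) +
      μ ((fun ω => (X₁ ω, X₂ ω)) ⁻¹' wedge (Ioi a) c)) := by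
  calc 1 = μ univ := measure_univ.symm
    _ ≤ μ ({ω | c * X₁ ω ≤ X₂ ω} ∪ ((fun ω => (X₁ ω, X₂ ω)) ⁻¹' wedge (Ioc 0 a) c ∪
        (fun ω => (X₁ ω, X₂ ω)) ⁻¹' wedge (Ioi a) c)) := measure_mono_ae <| by
      filter_upwards [h₁, h₂] with ω hω₁ hω₂ _
      by_cases hE : c * X₁ ω ≤ X₂ ω
      · exact Or.inl hE
      by_cases ha : X₁ ω ≤ a
      · exact Or.inr (Or.inl ⟨⟨hω₁, ha⟩, hω₂, not_le.1 hE⟩)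
      · exact Or.inr (Or.inr ⟨not_le.1 ha, hω₂, not_le.1 hE⟩)
    _ ≤ _ := (measure_union_le _ _).trans (add_le_add le_rfl (measure_union_le _ _))

lemma setLIntegral_Ioi_lt_setLIntegral_Ioc_of_median_lt {s m M : ℝ} (hs : 0 < s)
    (hm : ∫ x in Ioc 0 m, x ^ (s - 1) * exp (-x) = Gamma s / 2) (hM : m < M) :
    ∫⁻ x in Ioi M, ENNReal.ofReal (x ^ (s - 1) * exp (-x)) <
      ∫⁻ x in Ioc 0 M, ENNReal.ofReal (x ^ (s - 1) * exp (-x)) := by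
  set f : ℝ → ℝ := fun x => x ^ (s - 1) * exp (-x)
  have hf : IntegrableOn f (Ioi 0) :=
    (GammaIntegral_convergent hs).congr_fun (fun x _ => mul_comm _ _) measurableSet_Ioi
  have hm0 : 0 < m := by
    by_contra! h
    rw [Ioc_eq_empty (not_lt.2 h), setIntegral_empty] at hm
    linarith [Gamma_pos_of_pos hs]
  have hM0 : 0 < M := hm0.trans hM
  have hmid : 0 < ∫ x in Ioc m M, f x := by
    rw [← intervalIntegral.integral_of_le hM.le]
    refine intervalIntegral.intervalIntegral_pos_of_pos_on ?_ (fun x hx => ?_) hM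
    · exact (intervalIntegrable_iff_integrableOn_Ioc_of_le hM.le).2
        (hf.mono_set fun x hx => hm0.trans hx.1)
    · have : 0 < x := hm0.trans hx.1
      positivity
  have hlow : ∫ x in Ioc 0 M, f x = Gamma s / 2 + ∫ x in Ioc m M, f x := by
    rw [← hm, ← setIntegral_union (Ioc_disjoint_Ioc_of_le le_rfl) measurableSet_Ioc
      (hf.mono_set Ioc_subset_Ioi_self) (hf.mono_set fun x hx => hm0.trans hx.1),
      Ioc_union_Ioc_eq_Ioc hm0.le hM.le]
  have htotal : Gamma s = (∫ x in Ioc 0 M, f x) + ∫ x in Ioi M, f x := by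
    rw [Gamma_eq_integral hs, setIntegral_congr_fun measurableSet_Ioi fun x _ => mul_comm _ _,
      ← Ioc_union_Ioi_eq_Ioi hM0.le, setIntegral_union (Ioc_disjoint_Ioi le_rfl)
        measurableSet_Ioi (hf.mono_set Ioc_subset_Ioi_self) (hf.mono_set (Ioi_subset_Ioi hM0.le))]
  have hofReal : ∀ u ⊆ Ioi 0, MeasurableSet u →
      ∫⁻ x in u, ENNReal.ofReal (f x) = ENNReal.ofReal (∫ x in u, f x) := fun u hu hum =>
    (ofReal_integral_eq_lintegral_ofReal (hf.mono_set hu) <|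
      (ae_restrict_iff' hum).2 <| ae_of_all _ fun x hx => by
        have : 0 < x := hu hx
        positivity).symm
  rw [hofReal _ (Ioi_subset_Ioi hM0.le) measurableSet_Ioi,
    hofReal _ Ioc_subset_Ioi_self measurableSet_Ioc]
  exact (ENNReal.ofReal_lt_ofReal_iff (by linarith [Gamma_pos_of_pos hs])).2 (by linarith)

lemma setLIntegral_rpow_mul_exp_neg_mul {s q : ℝ} (hq : 0 < q) {u : Set ℝ}
    (hu : MeasurableSet u) (hu0 : u ⊆ Ioi 0) :
    ∫⁻ x in u, ENNReal.ofReal (x ^ (s - 1) * exp (-(q * x))) =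
      ENNReal.ofReal (q⁻¹ ^ s) *
        ∫⁻ t in (q⁻¹ * ·) ⁻¹' u, ENNReal.ofReal (t ^ (s - 1) * exp (-t)) := by
  have hqi : 0 < q⁻¹ := inv_pos.2 hq
  rw [setLIntegral_eq_setLIntegral_comp_mul_left hqi (by fun_prop) hu,
    ← lintegral_const_mul' _ _ ENNReal.ofReal_ne_top]
  refine setLIntegral_congr_fun (hu.preimage (measurable_const_mul _)) fun t ht => ?_
  have ht0 : 0 < t := pos_of_mul_pos_right (hu0 ht) hqi.le
  rw [← ENNReal.ofReal_mul hqi.le, ← ENNReal.ofReal_mul (by positivity),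
    mul_inv_cancel_left₀ hq.ne', mul_rpow hqi.le ht0.le, rpow_sub_one hqi.ne']
  field_simp

lemma setLIntegral_Ioi_lt_setLIntegral_Ioc_of_median_lt_mul {s m q a : ℝ} (hs : 0 < s)
    (hq : 0 < q) (ha : 0 < a)
    (hm : ∫ x in Ioc 0 m, x ^ (s - 1) * exp (-x) = Gamma s / 2) (hma : m < q * a) :
    ∫⁻ x in Ioi a, ENNReal.ofReal (x ^ (s - 1) * exp (-(q * x))) <
      ∫⁻ x in Ioc 0 a, ENNReal.ofReal (x ^ (s - 1) * exp (-(q * x))) := by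
  have hqi : 0 < q⁻¹ := inv_pos.2 hq
  rw [setLIntegral_rpow_mul_exp_neg_mul hq measurableSet_Ioi (Ioi_subset_Ioi ha.le),
    setLIntegral_rpow_mul_exp_neg_mul hq measurableSet_Ioc Ioc_subset_Ioi_self,
    preimage_const_mul_Ioi₀ _ hqi, preimage_const_mul_Ioc₀ _ _ hqi, zero_div, div_inv_eq_mul,
    mul_comm a q]
  exact (ENNReal.mul_lt_mul_iff_right (by positivity) ENNReal.ofReal_ne_top).2
    (setLIntegral_Ioi_lt_setLIntegral_Ioc_of_median_lt hs hm hma)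

lemma withDensity_gamma_scale_eq_gammaMeasure {α θ : ℝ} (hθ : 0 < θ) :
    volume.withDensity (fun x => ENNReal.ofReal (if 0 < x then
        x ^ (α - 1) * exp (-x / θ) / (Gamma α * θ ^ α) else 0)) = gammaMeasure α θ⁻¹ := by
  refine withDensity_congr_ae ?_
  filter_upwards [Measure.ae_ne volume 0] with x hx
  rcases hx.lt_or_gt with hx | hx
  · simp [hx.not_gt, hx.not_ge, gammaPDF, gammaPDFReal]
  · rw [gammaPDF, gammaPDFReal, if_pos hx, if_pos hx.le, inv_rpow hθ.le]
    congr 1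
    field_simp

lemma gammaPDFReal_mul_gammaPDFReal_mul {α₁ α₂ r₁ r₂ x t : ℝ} (hx : 0 < x) (ht : 0 ≤ t) :
    gammaPDFReal α₁ r₁ x * (x * gammaPDFReal α₂ r₂ (x * t)) =
      r₁ ^ α₁ / Gamma α₁ * (r₂ ^ α₂ / Gamma α₂) * t ^ (α₂ - 1) *
        (x ^ (α₁ + α₂ - 1) * exp (-((r₁ + r₂ * t) * x))) := by
  have hxpow : x ^ (α₁ + α₂ - 1) = x ^ (α₁ - 1) * x ^ (α₂ - 1) * x := by
    rw [← rpow_add hx, ← rpow_add_one hx.ne']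
    ring_nf
  rw [gammaPDFReal, gammaPDFReal, if_pos hx.le, if_pos (mul_nonneg hx.le ht), hxpow,
    mul_rpow hx.le ht, show -((r₁ + r₂ * t) * x) = -(r₁ * x) + -(r₂ * (x * t)) by ring, exp_add]
  ring

lemma setLIntegral_gammaPDF_mul_Ioi_lt_Ioc {α₁ α₂ r₁ r₂ m a t : ℝ} (hα₁ : 0 < α₁)
    (hα₂ : 0 < α₂) (hr₁ : 0 < r₁) (hr₂ : 0 < r₂) (ha : 0 < a) (ht : 0 < t)
    (hm : ∫ x in Ioc 0 m, x ^ (α₁ + α₂ - 1) * exp (-x) = Gamma (α₁ + α₂) / 2)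
    (hma : m ≤ r₁ * a) :
    ∫⁻ x in Ioi a, gammaPDF α₁ r₁ x * (ENNReal.ofReal x * gammaPDF α₂ r₂ (x * t)) <
      ∫⁻ x in Ioc 0 a, gammaPDF α₁ r₁ x * (ENNReal.ofReal x * gammaPDF α₂ r₂ (x * t)) := by
  -- the conditional law of `X₁` given `X₂ / X₁ = t` is gamma with shape `α₁ + α₂` and rate `q`
  set q := r₁ + r₂ * t
  set K := r₁ ^ α₁ / Gamma α₁ * (r₂ ^ α₂ / Gamma α₂) * t ^ (α₂ - 1)
  have hK : 0 < K := by
    have := Gamma_pos_of_pos hα₁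
    have := Gamma_pos_of_pos hα₂
    positivity
  have hfactor : ∀ u ⊆ Ioi 0, MeasurableSet u →
      ∫⁻ x in u, gammaPDF α₁ r₁ x * (ENNReal.ofReal x * gammaPDF α₂ r₂ (x * t)) =
        ENNReal.ofReal K * ∫⁻ x in u, ENNReal.ofReal (x ^ (α₁ + α₂ - 1) * exp (-(q * x))) := by
    intro u hu hum
    rw [← lintegral_const_mul' _ _ ENNReal.ofReal_ne_top]
    refine setLIntegral_congr_fun hum fun x hx => ?_
    have hx0 : 0 < x := hu hx
    rw [gammaPDF, gammaPDF, ← ENNReal.ofReal_mul hx0.le,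
      ← ENNReal.ofReal_mul (gammaPDFReal_nonneg hα₁ hr₁ x),
      gammaPDFReal_mul_gammaPDFReal_mul hx0 ht.le, ENNReal.ofReal_mul hK.le]
  rw [hfactor _ (Ioi_subset_Ioi ha.le) measurableSet_Ioi,
    hfactor _ Ioc_subset_Ioi_self measurableSet_Ioc]
  refine (ENNReal.mul_lt_mul_iff_right (by positivity) ENNReal.ofReal_ne_top).2 ?_
  refine setLIntegral_Ioi_lt_setLIntegral_Ioc_of_median_lt_mul (add_pos hα₁ hα₂) (by positivity)
    ha hm ?_
  calc m ≤ r₁ * a := hma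
    _ < q * a := by gcongr; simp only [q]; linarith [mul_pos hr₂ ht]

lemma gammaMeasure_prod_wedge_Ioi_lt_Ioc {α₁ α₂ r₁ r₂ m a c : ℝ} (hα₁ : 0 < α₁) (hα₂ : 0 < α₂)
    (hr₁ : 0 < r₁) (hr₂ : 0 < r₂) (ha : 0 < a) (hc : 0 < c)
    (hm : ∫ x in Ioc 0 m, x ^ (α₁ + α₂ - 1) * exp (-x) = Gamma (α₁ + α₂) / 2)
    (hma : m ≤ r₁ * a) :
    ((gammaMeasure α₁ r₁).prod (gammaMeasure α₂ r₂)) (wedge (Ioi a) c) <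
      ((gammaMeasure α₁ r₁).prod (gammaMeasure α₂ r₂)) (wedge (Ioc 0 a) c) := by
  have := isProbabilityMeasure_gammaMeasure hα₁ hr₁
  have := isProbabilityMeasure_gammaMeasure hα₂ hr₂
  have hwedge := fun {A : Set ℝ} (hA : MeasurableSet A) (hA0 : A ⊆ Ioi 0) =>
    prod_withDensity_wedge (f := gammaPDF α₁ r₁) (g := gammaPDF α₂ r₂)
      (measurable_gammaPDFReal α₁ r₁).ennreal_ofReal (measurable_gammaPDFReal α₂ r₂).ennreal_ofReal
      hA hA0 c
  rw [gammaMeasure, gammaMeasure, hwedge measurableSet_Ioi (Ioi_subset_Ioi ha.le),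
    hwedge measurableSet_Ioc Ioc_subset_Ioi_self]
  refine setLIntegral_strict_mono measurableSet_Ioo (by simp [hc]) ?_ ?_ ?_
  · exact Measurable.lintegral_prod_left' (μ := volume.restrict (Ioc 0 a))
      (f := fun p : ℝ × ℝ => gammaPDF α₁ r₁ p.1 * (ENNReal.ofReal p.1 * gammaPDF α₂ r₂ (p.1 * p.2)))
      (by unfold gammaPDF; fun_prop)
  · rw [← hwedge measurableSet_Ioi (Ioi_subset_Ioi ha.le), ← gammaMeasure, ← gammaMeasure]
    exact measure_ne_top _ _
  exact ae_of_all _ fun t ⟨ht, _⟩ =>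
    setLIntegral_gammaPDF_mul_Ioi_lt_Ioc hα₁ hα₂ hr₁ hr₂ ha ht hm hma

lemma min_div_add_div_add_eq_left {x y a₁ a₂ : ℝ} (ha₁ : 0 < a₁) (ha₂ : 0 < a₂)
    (h : a₂ / a₁ * x ≤ y) : min (x / a₁) ((x + y) / (a₁ + a₂)) = x / a₁ := by
  refine min_eq_left ?_
  rw [div_le_div_iff₀ ha₁ (add_pos ha₁ ha₂)]
  rw [div_mul_eq_mul_div, div_le_iff₀ ha₁] at h
  nlinarith

lemma add_div_add_lt_div {x y a₁ a₂ : ℝ} (ha₁ : 0 < a₁) (ha₂ : 0 < a₂)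
    (h : y < a₂ / a₁ * x) : (x + y) / (a₁ + a₂) < x / a₁ := by
  rw [div_lt_div_iff₀ (add_pos ha₁ ha₂) ha₁]
  rw [div_mul_eq_mul_div, lt_div_iff₀ ha₁] at h
  nlinarith

lemma StrictAntiOn.Ioc_zero_one {W : ℝ → ℝ} (hW : StrictAntiOn W (Ioo 0 1)) (hW1 : W 1 = 0)
    (hWnn : ∀ t, 0 < t → 0 ≤ W t) : StrictAntiOn W (Ioc 0 1) := by
  rintro v ⟨hv0, hv1⟩ u ⟨hu0, hu1⟩ hvu
  rcases hu1.lt_or_eq with hu1 | rfl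
  · exact hW ⟨hv0, hvu.trans hu1⟩ ⟨hu0, hu1⟩ hvu
  · -- the midpoint `w` of `v` and `1` gives `W 1 = 0 ≤ W w < W v`
    have hw : (v + 1) / 2 ∈ Ioo (0 : ℝ) 1 := ⟨by linarith, by linarith⟩
    have := hW ⟨hv0, hvu⟩ hw (by linarith)
    linarith [hWnn _ hw.1]

lemma StrictAntiOn.apply_div_lt_apply_min_add_div_add {W : ℝ → ℝ} (hW : StrictAntiOn W (Ioc 0 1))
    {x y a₁ a₂ θ : ℝ} (ha₁ : 0 < a₁) (ha₂ : 0 < a₂) (hθ : 0 < θ) (hx : 0 < x)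
    (hxθ : x ≤ a₁ * θ) (hy : 0 < y) (hyx : y < a₂ / a₁ * x) :
    W (x / a₁ / θ) < W (min (x / a₁) ((x + y) / (a₁ + a₂)) / θ) := by
  have hlt := div_lt_div_of_pos_right (add_div_add_lt_div ha₁ ha₂ hyx) hθ
  have hle : x / a₁ / θ ≤ 1 := by rwa [div_div, div_le_one (by positivity)]
  rw [min_eq_right (add_div_add_lt_div ha₁ ha₂ hyx).le]
  exact hW ⟨by positivity, hlt.le.trans hle⟩ ⟨by positivity, hle⟩ hlt

lemma ENNReal.half_lt_add_half_mul {b c e : ℝ≥0∞} (hb : b ≠ ∞) (he : e ≠ ∞) (hcb : c < b)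
    (h : 1 ≤ e + (b + c)) : 1 / 2 < b + 1 / 2 * e := by
  have h2 : 1 < e + 2 * b := h.trans_lt <| by
    rw [two_mul]
    exact ENNReal.add_lt_add_left he (ENNReal.add_lt_add_left hb hcb)
  calc 1 / 2 = 1 / 2 * 1 := (mul_one _).symm
    _ < 1 / 2 * (e + 2 * b) := (ENNReal.mul_lt_mul_iff_right (by norm_num) (by norm_num)).2 h2
    _ = b + 1 / 2 * e := by
      rw [mul_add, ← mul_assoc, one_div, ENNReal.inv_mul_cancel two_ne_zero ENNReal.ofNat_ne_top,
        one_mul, add_comm]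

theorem stmt_11_general {Ω : Type*} [MeasureSpace Ω] [IsProbabilityMeasure (ℙ : Measure Ω)]
    (α₁ α₂ θ₁ θ₂ : ℝ) (hα₁ : 0 < α₁) (hα₂ : 0 < α₂)
    (hθ₁ : 0 < θ₁) (hθ : θ₁ ≤ θ₂)
    (X₁ X₂ : Ω → ℝ) (hX₁ : Measurable X₁) (hX₂ : Measurable X₂)
    (hlaw₁ : Measure.map X₁ ℙ = volume.withDensity
      (fun x => ENNReal.ofReal (if 0 < x then
        x ^ (α₁ - 1) * Real.exp (-x / θ₁) / (Real.Gamma α₁ * θ₁ ^ α₁) else 0)))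
    (hlaw₂ : Measure.map X₂ ℙ = volume.withDensity
      (fun x => ENNReal.ofReal (if 0 < x then
        x ^ (α₂ - 1) * Real.exp (-x / θ₂) / (Real.Gamma α₂ * θ₂ ^ α₂) else 0)))
    (hindep : IndepFun X₁ X₂)
    (ν : ℝ → ℝ)
    (hν : ∀ a, 0 < a →
      ∫ x in Ioc 0 (ν a), x ^ (a - 1) * Real.exp (-x) = Real.Gamma a / 2)
    (hνα : ν (α₁ + α₂) ≤ α₁)
    (W : ℝ → ℝ) (hW1 : W 1 = 0) (hWnn : ∀ t, 0 < t → 0 ≤ W t)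
    (hWanti : StrictAntiOn W (Ioo 0 1)) :
    (1 : ℝ≥0∞) / 2 <
      ℙ {ω | W (X₁ ω / α₁ / θ₁) <
              W (min (X₁ ω / α₁) ((X₁ ω + X₂ ω) / (α₁ + α₂)) / θ₁)}
      + (1 / 2) *
        ℙ {ω | W (X₁ ω / α₁ / θ₁) =
                W (min (X₁ ω / α₁) ((X₁ ω + X₂ ω) / (α₁ + α₂)) / θ₁)} := by
  have hθ₂ : 0 < θ₂ := hθ₁.trans_le hθ
  have hjoint : ∀ S, MeasurableSet S → ℙ ((fun ω => (X₁ ω, X₂ ω)) ⁻¹' S) =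
      ((gammaMeasure α₁ θ₁⁻¹).prod (gammaMeasure α₂ θ₂⁻¹)) S := fun S hS => by
    rw [← Measure.map_apply (hX₁.prodMk hX₂) hS, (indepFun_iff_map_prod_eq_prod_map_map
      hX₁.aemeasurable hX₂.aemeasurable).1 hindep, hlaw₁, hlaw₂,
      withDensity_gamma_scale_eq_gammaMeasure hθ₁, withDensity_gamma_scale_eq_gammaMeasure hθ₂]
  set a := α₁ * θ₁
  set c := α₂ / α₁
  set E := {ω | c * X₁ ω ≤ X₂ ω}
  set B := (fun ω => (X₁ ω, X₂ ω)) ⁻¹' wedge (Ioc 0 a) c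
  set C := (fun ω => (X₁ ω, X₂ ω)) ⁻¹' wedge (Ioi a) c
  have hCB : ℙ C < ℙ B := by
    rw [hjoint _ (measurableSet_Ioi.wedge c), hjoint _ (measurableSet_Ioc.wedge c)]
    exact gammaMeasure_prod_wedge_Ioi_lt_Ioc hα₁ hα₂ (inv_pos.2 hθ₁) (inv_pos.2 hθ₂)
      (by positivity) (by positivity) (hν _ (add_pos hα₁ hα₂))
      (hνα.trans_eq (by simp only [a]; field_simp))
  have hcover : 1 ≤ ℙ E + (ℙ B + ℙ C) := one_le_measure_add_measure_wedge_add_measure_wedge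
    (ae_pos_of_map_eq_withDensity hX₁ (fun x hx => by simp [hx.not_gt]) hlaw₁)
    (ae_pos_of_map_eq_withDensity hX₂ (fun x hx => by simp [hx.not_gt]) hlaw₂) a c
  have hB : B ⊆ {ω | W (X₁ ω / α₁ / θ₁) <
      W (min (X₁ ω / α₁) ((X₁ ω + X₂ ω) / (α₁ + α₂)) / θ₁)} :=
    fun ω ⟨⟨h₁, ha⟩, h₂, hc⟩ => (hWanti.Ioc_zero_one hW1 hWnn).apply_div_lt_apply_min_add_div_add
      hα₁ hα₂ hθ₁ h₁ ha h₂ hc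
  have hE : E ⊆ {ω | W (X₁ ω / α₁ / θ₁) =
      W (min (X₁ ω / α₁) ((X₁ ω + X₂ ω) / (α₁ + α₂)) / θ₁)} := fun ω hω =>
    show _ = _ by rw [min_div_add_div_add_eq_left hα₁ hα₂ hω]
  calc (1 : ℝ≥0∞) / 2 < ℙ B + 1 / 2 * ℙ E :=
        ENNReal.half_lt_add_half_mul (measure_ne_top _ _) (measure_ne_top _ _) hCB hcover
    _ ≤ _ := by gcongr

/-- Example 4.1.1 (iv): for independent gammas with ordered scales, if
`ν(α₁+α₂) ≤ α₁` then the unbiased estimator `X₁/α₁` is Pitman nearer to `θ₁`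
than the restricted MLE `min{X₁/α₁, (X₁+X₂)/(α₁+α₂)}` under the GPN criterion
with a general scale loss `W(a/θ₁)`. -/
theorem stmt_11 {Ω : Type*} [MeasureSpace Ω] [IsProbabilityMeasure (ℙ : Measure Ω)]
    (α₁ α₂ θ₁ θ₂ : ℝ) (hα₁ : 0 < α₁) (hα₂ : 0 < α₂)
    (hθ₁ : 0 < θ₁) (hθ : θ₁ ≤ θ₂)
    (X₁ X₂ : Ω → ℝ) (hX₁ : Measurable X₁) (hX₂ : Measurable X₂)
    (hlaw₁ : Measure.map X₁ ℙ = volume.withDensity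
      (fun x => ENNReal.ofReal (if 0 < x then
        x ^ (α₁ - 1) * Real.exp (-x / θ₁) / (Real.Gamma α₁ * θ₁ ^ α₁) else 0)))
    (hlaw₂ : Measure.map X₂ ℙ = volume.withDensity
      (fun x => ENNReal.ofReal (if 0 < x then
        x ^ (α₂ - 1) * Real.exp (-x / θ₂) / (Real.Gamma α₂ * θ₂ ^ α₂) else 0)))
    (hindep : IndepFun X₁ X₂)
    (ν : ℝ → ℝ)
    (hν : ∀ a, 0 < a →
      ∫ x in Ioc 0 (ν a), x ^ (a - 1) * Real.exp (-x) = Real.Gamma a / 2)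
    (hνα : ν (α₁ + α₂) ≤ α₁)
    (W : ℝ → ℝ) (hW1 : W 1 = 0) (hWnn : ∀ t, 0 < t → 0 ≤ W t)
    (hWanti : StrictAntiOn W (Ioo 0 1)) (hWmono : StrictMonoOn W (Ioi 1)) :
    (1 : ℝ≥0∞) / 2 <
      ℙ {ω | W (X₁ ω / α₁ / θ₁) <
              W (min (X₁ ω / α₁) ((X₁ ω + X₂ ω) / (α₁ + α₂)) / θ₁)}
      + (1 / 2) *
        ℙ {ω | W (X₁ ω / α₁ / θ₁) =
                W (min (X₁ ω / α₁) ((X₁ ω + X₂ ω) / (α₁ + α₂)) / θ₁)} :=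
  stmt_11_general α₁ α₂ θ₁ θ₂ hα₁ hα₂ hθ₁ hθ X₁ X₂ hX₁ hX₂ hlaw₁ hlaw₂ hindep ν hν hνα W hW1 hWnn
    hWanti
end

section
/- For α > 0, the median ν(α) of the Gamma(α, 1) distribution satisfies α − 1/3 < ν(α) < α. -/
/-!
Pair each `x ∈ (0, m)` with the `y > m` such that `y / x = eᵗ` and `y - x = m t`, namely
`x = m t / (eᵗ - 1)` and `y = x eᵗ` for `t > 0`. Substituting `t` on both sides turns the two
pieces `∫₀ᵐ` and `∫ₘ^∞` of the Gamma integral into integrals over `t ∈ (0, ∞)` whose integrands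
differ only by the factors `t eᵗ - eᵗ + 1` and `(eᵗ - 1 - t) e^{(α - m) t}`. For `m = α` the
second factor is the smaller one, so more than half of the mass lies below `α`; for
`m = α - 1/3` it is the larger one, so less than half lies below `α - 1/3`. After `t = 2s`,
resp. `t = 3s`, the two comparisons become `sinh s < s cosh s` and
`3 s cosh s < sinh 2s + sinh s`, which hold term by term in the power series.
-/

open MeasureTheory Set Real
open scoped Nat

namespace Real

theorem sinh_lt_mul_cosh {s : ℝ} (hs : 0 < s) : sinh s < s * cosh s := by
  refine hasSum_lt (i := 1) (fun n => ?_) ?_ (hasSum_sinh s) ((hasSum_cosh s).mul_left s)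
  · have hfact : ((2 * n)! : ℝ) ≤ (2 * n + 1)! := by exact_mod_cast Nat.factorial_le (by omega)
    calc s ^ (2 * n + 1) / (2 * n + 1)! ≤ s ^ (2 * n + 1) / (2 * n)! := by gcongr
      _ = s * (s ^ (2 * n) / (2 * n)!) := by ring
  · norm_num [Nat.factorial]
    nlinarith [pow_pos hs 3]

theorem three_mul_mul_cosh_lt {s : ℝ} (hs : 0 < s) :
    3 * s * cosh s < sinh (2 * s) + sinh s := by
  have hcosh (n : ℕ) : 3 * (s * (s ^ (2 * n) / (2 * n)!))
      = (3 * (2 * n + 1) : ℝ) * (s ^ (2 * n + 1) / (2 * n + 1)!) := by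
    rw [Nat.factorial_succ]; push_cast; field_simp; ring
  have hsinh (n : ℕ) : (2 * s) ^ (2 * n + 1) / ((2 * n + 1)! : ℝ) + s ^ (2 * n + 1) / (2 * n + 1)!
      = (2 ^ (2 * n + 1) + 1 : ℝ) * (s ^ (2 * n + 1) / (2 * n + 1)!) := by
    rw [mul_pow]; ring
  have hcoeff (n : ℕ) : (3 * (2 * n + 1) : ℝ) ≤ 2 ^ (2 * n + 1) + 1 := by
    have := one_add_mul_le_pow (a := (3 : ℝ)) (by norm_num) n
    rw [pow_succ, pow_mul]; norm_num at this ⊢; linarith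
  have hlhs := ((hasSum_cosh s).mul_left s).mul_left 3
  rw [← mul_assoc] at hlhs
  refine hasSum_lt (i := 2) (fun n => ?_) ?_ hlhs ((hasSum_sinh (2 * s)).add (hasSum_sinh s))
  · simp only [hcosh, hsinh]
    gcongr
    exact hcoeff n
  · simp only [hcosh, hsinh]
    gcongr
    norm_num

theorem exp_sub_one_pos {t : ℝ} (ht : 0 < t) : 0 < exp t - 1 :=
  sub_pos.2 (one_lt_exp_iff.2 ht)

theorem exp_sub_one_ne_zero {t : ℝ} (ht : t ≠ 0) : exp t - 1 ≠ 0 :=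
  sub_ne_zero.2 (exp_eq_one_iff t |>.not.2 ht)

theorem mul_exp_sub_exp_add_one_pos {t : ℝ} (ht : t ≠ 0) : 0 < t * exp t - exp t + 1 := by
  have h := add_one_lt_exp (neg_ne_zero.2 ht)
  rw [exp_neg] at h
  have := mul_lt_mul_of_pos_right h (exp_pos t)
  rw [inv_mul_cancel₀ (exp_pos t).ne'] at this
  nlinarith

theorem exp_sub_one_sub_lt {t : ℝ} (ht : 0 < t) :
    exp t - 1 - t < t * exp t - exp t + 1 := by
  obtain ⟨s, hs, rfl⟩ : ∃ s, 0 < s ∧ t = 2 * s := ⟨t / 2, by positivity, by ring⟩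
  have key := sinh_lt_mul_cosh hs
  rw [sinh_eq, cosh_eq, exp_neg] at key
  have ha := exp_pos s
  rw [show exp (2 * s) = exp s ^ 2 by rw [← exp_nat_mul]; norm_num]
  field_simp at key
  nlinarith

theorem mul_exp_sub_exp_add_one_lt {t : ℝ} (ht : 0 < t) :
    t * exp t - exp t + 1 < (exp t - 1 - t) * exp (t / 3) := by
  obtain ⟨s, hs, rfl⟩ : ∃ s, 0 < s ∧ t = 3 * s := ⟨t / 3, by positivity, by ring⟩
  have key := three_mul_mul_cosh_lt hs
  simp only [sinh_eq, cosh_eq, exp_neg] at key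
  have ha := exp_pos s
  rw [show exp (2 * s) = exp s ^ 2 by rw [← exp_nat_mul]; norm_num] at key
  rw [show exp (3 * s) = exp s ^ 3 by rw [← exp_nat_mul]; norm_num,
    mul_div_cancel_left₀ s three_ne_zero]
  field_simp at key
  nlinarith

end Real

theorem MeasureTheory.setIntegral_lt_setIntegral {X : Type*} [MeasurableSpace X] {μ : Measure X}
    {s : Set X} {f g : X → ℝ} (hs : MeasurableSet s) (hμs : μ s ≠ 0) (hf : IntegrableOn f s μ)
    (hg : IntegrableOn g s μ) (hlt : ∀ x ∈ s, f x < g x) :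
    ∫ x in s, f x ∂μ < ∫ x in s, g x ∂μ := by
  have hnonneg : 0 ≤ᵐ[μ.restrict s] g - f :=
    (ae_restrict_iff' hs).2 (ae_of_all _ fun x hx => sub_nonneg.2 (hlt x hx).le)
  have hsupp : Function.support (g - f) ∩ s = s :=
    inter_eq_right.2 fun x hx => sub_ne_zero.2 (hlt x hx).ne'
  have hpos := (setIntegral_pos_iff_support_of_nonneg_ae hnonneg (hg.sub hf)).2
    (by rw [hsupp]; exact pos_iff_ne_zero.2 hμs)
  rw [integral_sub' hg hf] at hpos
  linarith

theorem MeasureTheory.setIntegral_image_lt_setIntegral_image {s : Set ℝ} (hs : MeasurableSet s)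
    (hs₀ : volume s ≠ 0) {u u' v v' f : ℝ → ℝ}
    (hu : ∀ x ∈ s, HasDerivWithinAt u (u' x) s x) (hui : InjOn u s)
    (hv : ∀ x ∈ s, HasDerivWithinAt v (v' x) s x) (hvi : InjOn v s)
    (hfu : IntegrableOn f (u '' s)) (hfv : IntegrableOn f (v '' s))
    (hlt : ∀ x ∈ s, |u' x| * f (u x) < |v' x| * f (v x)) :
    ∫ y in u '' s, f y < ∫ y in v '' s, f y := by
  rw [integral_image_eq_integral_abs_deriv_smul hs hu hui,
    integral_image_eq_integral_abs_deriv_smul hs hv hvi]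
  exact setIntegral_lt_setIntegral hs hs₀
    ((integrableOn_image_iff_integrableOn_abs_deriv_smul hs hu hui f).1 hfu)
    ((integrableOn_image_iff_integrableOn_abs_deriv_smul hs hv hvi f).1 hfv) hlt

noncomputable def gammaIntegrand (α x : ℝ) : ℝ := x ^ (α - 1) * exp (-x)

noncomputable def lowerGamma (α x : ℝ) : ℝ := ∫ t in Ioc 0 x, gammaIntegrand α t

section GammaIntegrand

variable {α : ℝ}

theorem gammaIntegrand_pos {x : ℝ} (hx : 0 < x) : 0 < gammaIntegrand α x := by
  unfold gammaIntegrand; positivity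

theorem integrableOn_gammaIntegrand (hα : 0 < α) : IntegrableOn (gammaIntegrand α) (Ioi 0) :=
  (GammaIntegral_convergent hα).congr_fun (fun _ _ => mul_comm _ _) measurableSet_Ioi

theorem lowerGamma_add_integral_Ioi (hα : 0 < α) {x : ℝ} (hx : 0 ≤ x) :
    lowerGamma α x + ∫ t in Ioi x, gammaIntegrand α t = Gamma α := by
  have hΓ : Gamma α = ∫ t in Ioi 0, gammaIntegrand α t :=
    (Gamma_eq_integral hα).trans (setIntegral_congr_fun measurableSet_Ioi fun _ _ => mul_comm _ _)
  rw [hΓ, ← Ioc_union_Ioi_eq_Ioi hx, setIntegral_union (Ioc_disjoint_Ioi le_rfl) measurableSet_Ioi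
    ((integrableOn_gammaIntegrand hα).mono_set Ioc_subset_Ioi_self)
    ((integrableOn_gammaIntegrand hα).mono_set (Ioi_subset_Ioi hx)), lowerGamma]

theorem lowerGamma_eq_integral_Ioo (x : ℝ) :
    lowerGamma α x = ∫ t in Ioo 0 x, gammaIntegrand α t :=
  setIntegral_congr_set Ioo_ae_eq_Ioc |>.symm

theorem lowerGamma_mono (hα : 0 < α) : Monotone (lowerGamma α) := fun _ _ hxy =>
  setIntegral_mono_set ((integrableOn_gammaIntegrand hα).mono_set Ioc_subset_Ioi_self)
    ((ae_restrict_iff' measurableSet_Ioc).2 (ae_of_all _ fun _ ht => (gammaIntegrand_pos ht.1).le))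
    (Ioc_subset_Ioc_right hxy).eventuallyLE

end GammaIntegrand

noncomputable def pairLow (m t : ℝ) : ℝ := m * t / (exp t - 1)

noncomputable def pairHigh (m t : ℝ) : ℝ := pairLow m t * exp t

section Pairing

variable {m t : ℝ}

theorem hasDerivAt_pairLow (ht : t ≠ 0) :
    HasDerivAt (pairLow m) (-(m * (t * exp t - exp t + 1)) / (exp t - 1) ^ 2) t := by
  refine (((hasDerivAt_id t).const_mul m).fun_div ((hasDerivAt_exp t).sub_const 1)
    (exp_sub_one_ne_zero ht)).congr_deriv ?_
  simp only [id]
  ring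

theorem hasDerivAt_pairHigh (ht : t ≠ 0) :
    HasDerivAt (pairHigh m) (m * exp t * (exp t - 1 - t) / (exp t - 1) ^ 2) t := by
  refine ((hasDerivAt_pairLow ht).fun_mul (hasDerivAt_exp t)).congr_deriv ?_
  unfold pairLow
  field_simp [exp_sub_one_ne_zero ht]
  ring

theorem pairHigh_sub_pairLow (ht : t ≠ 0) : pairHigh m t - pairLow m t = m * t := by
  unfold pairHigh pairLow
  field_simp [exp_sub_one_ne_zero ht]

theorem continuousOn_pairLow (m : ℝ) : ContinuousOn (pairLow m) (Ioi 0) :=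
  fun _ ht => (hasDerivAt_pairLow (ne_of_gt ht)).continuousAt.continuousWithinAt

theorem continuousOn_pairHigh (m : ℝ) : ContinuousOn (pairHigh m) (Ioi 0) :=
  fun _ ht => (hasDerivAt_pairHigh (ne_of_gt ht)).continuousAt.continuousWithinAt

section Bounds

variable (hm : 0 < m) (ht : 0 < t)
include hm ht

theorem pairLow_pos : 0 < pairLow m t :=
  div_pos (mul_pos hm ht) (exp_sub_one_pos ht)

theorem pairLow_lt : pairLow m t < m := by
  have := add_one_lt_exp ht.ne'
  rw [pairLow, div_lt_iff₀ (exp_sub_one_pos ht)]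
  nlinarith

theorem mul_exp_neg_lt_pairLow : m * exp (-t) < pairLow m t := by
  have := mul_exp_sub_exp_add_one_pos ht.ne'
  rw [pairLow, exp_neg, lt_div_iff₀ (exp_sub_one_pos ht)]
  field_simp
  linarith

theorem pairLow_lt_two_mul_div : pairLow m t < 2 * m / t := by
  have := quadratic_le_exp_of_nonneg ht.le
  rw [pairLow, div_lt_div_iff₀ (exp_sub_one_pos ht) ht]
  nlinarith

theorem lt_pairHigh : m < pairHigh m t := by
  have h := mul_lt_mul_of_pos_right (mul_exp_neg_lt_pairLow hm ht) (exp_pos t)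
  rwa [mul_assoc, ← exp_add, neg_add_cancel, exp_zero, mul_one] at h

theorem pairHigh_lt : pairHigh m t < m * exp t :=
  mul_lt_mul_of_pos_right (pairLow_lt hm ht) (exp_pos t)

theorem mul_lt_pairHigh : m * t < pairHigh m t := by
  linarith [pairHigh_sub_pairLow (m := m) ht.ne', pairLow_pos hm ht]

end Bounds

variable (hm : 0 < m)
include hm

theorem image_pairLow : pairLow m '' Ioi 0 = Ioo 0 m := by
  refine Subset.antisymm ?_ fun x hx => ?_
  · rintro _ ⟨t, ht, rfl⟩
    exact ⟨pairLow_pos hm ht, pairLow_lt hm ht⟩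
  obtain ⟨hx₀, hxm⟩ := hx
  have ht₁ : 0 < 2 * m / x := by positivity
  have ht₂ : 0 < log (m / x) := log_pos ((one_lt_div hx₀).2 hxm)
  have h₁ : pairLow m (2 * m / x) ≤ x := by
    have := pairLow_lt_two_mul_div hm ht₁
    rw [div_div_cancel₀ (by positivity)] at this
    exact this.le
  have h₂ : x ≤ pairLow m (log (m / x)) := by
    have := mul_exp_neg_lt_pairLow hm ht₂
    rw [exp_neg, exp_log (by positivity), inv_div, mul_div_cancel₀ _ hm.ne'] at this
    exact this.le
  exact isPreconnected_Ioi.intermediate_value ht₁ ht₂ (continuousOn_pairLow m) ⟨h₁, h₂⟩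

theorem image_pairHigh : pairHigh m '' Ioi 0 = Ioi m := by
  refine Subset.antisymm ?_ fun y (hy : m < y) => ?_
  · rintro _ ⟨t, ht, rfl⟩
    exact lt_pairHigh hm ht
  have ht₁ : 0 < log (y / m) := log_pos ((one_lt_div hm).2 hy)
  have ht₂ : 0 < y / m := by linarith [(one_lt_div hm).2 hy]
  have h₁ : pairHigh m (log (y / m)) ≤ y := by
    have := pairHigh_lt hm ht₁
    rw [exp_log ht₂, mul_div_cancel₀ _ hm.ne'] at this
    exact this.le
  have h₂ : y ≤ pairHigh m (y / m) := by
    have := mul_lt_pairHigh hm ht₂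
    rw [mul_div_cancel₀ _ hm.ne'] at this
    exact this.le
  exact isPreconnected_Ioi.intermediate_value ht₁ ht₂ (continuousOn_pairHigh m) ⟨h₁, h₂⟩

theorem injOn_pairLow : InjOn (pairLow m) (Ioi 0) := by
  refine (strictAntiOn_of_hasDerivWithinAt_neg (convex_Ioi 0)
    (f' := fun t => -(m * (t * exp t - exp t + 1)) / (exp t - 1) ^ 2)
    (continuousOn_pairLow m) ?_ ?_).injOn
    <;> simp only [interior_Ioi]
  · exact fun t ht => (hasDerivAt_pairLow (ne_of_gt ht)).hasDerivWithinAt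
  intro t ht
  have := mul_pos hm (mul_exp_sub_exp_add_one_pos (ne_of_gt ht))
  exact div_neg_of_neg_of_pos (neg_neg_of_pos this) (pow_pos (exp_sub_one_pos ht) 2)

theorem injOn_pairHigh : InjOn (pairHigh m) (Ioi 0) := by
  refine (strictMonoOn_of_hasDerivWithinAt_pos (convex_Ioi 0)
    (f' := fun t => m * exp t * (exp t - 1 - t) / (exp t - 1) ^ 2)
    (continuousOn_pairHigh m) ?_ ?_).injOn
    <;> simp only [interior_Ioi]
  · exact fun t ht => (hasDerivAt_pairHigh (ne_of_gt ht)).hasDerivWithinAt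
  intro t ht
  have := add_one_lt_exp (ne_of_gt ht)
  exact div_pos (mul_pos (mul_pos hm (exp_pos t)) (by linarith)) (pow_pos (exp_sub_one_pos ht) 2)

end Pairing

section Comparison

variable {α m t : ℝ}

theorem gammaIntegrand_pairHigh (hm : 0 < m) (ht : 0 < t) :
    gammaIntegrand α (pairHigh m t) = exp ((α - 1 - m) * t) * gammaIntegrand α (pairLow m t) := by
  have hsub := pairHigh_sub_pairLow (m := m) ht.ne'
  unfold gammaIntegrand
  rw [show -pairHigh m t = -pairLow m t + -(m * t) by linarith, pairHigh,
    mul_rpow (pairLow_pos hm ht).le (exp_pos t).le, ← exp_mul,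
    show (α - 1 - m) * t = t * (α - 1) + -(m * t) by ring, exp_add, exp_add]
  ring

theorem abs_deriv_pairLow_mul_gammaIntegrand (hm : 0 < m) (ht : 0 < t) :
    |-(m * (t * exp t - exp t + 1)) / (exp t - 1) ^ 2| * gammaIntegrand α (pairLow m t)
      = (t * exp t - exp t + 1) * (m * gammaIntegrand α (pairLow m t) / (exp t - 1) ^ 2) := by
  have := mul_pos hm (mul_exp_sub_exp_add_one_pos ht.ne')
  rw [abs_div, abs_neg, abs_of_pos this, abs_of_pos (pow_pos (exp_sub_one_pos ht) 2)]
  ring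

theorem abs_deriv_pairHigh_mul_gammaIntegrand (hm : 0 < m) (ht : 0 < t) :
    |m * exp t * (exp t - 1 - t) / (exp t - 1) ^ 2| * gammaIntegrand α (pairHigh m t)
      = (exp t - 1 - t) * exp ((α - m) * t)
        * (m * gammaIntegrand α (pairLow m t) / (exp t - 1) ^ 2) := by
  have := add_one_lt_exp ht.ne'
  rw [abs_of_pos (div_pos (mul_pos (mul_pos hm (exp_pos t)) (by linarith))
    (pow_pos (exp_sub_one_pos ht) 2)), gammaIntegrand_pairHigh hm ht,
    show (α - m) * t = t + (α - 1 - m) * t by ring, exp_add]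
  ring

theorem pairing_weight_pos (hm : 0 < m) (ht : 0 < t) :
    0 < m * gammaIntegrand α (pairLow m t) / (exp t - 1) ^ 2 :=
  div_pos (mul_pos hm (gammaIntegrand_pos (pairLow_pos hm ht))) (pow_pos (exp_sub_one_pos ht) 2)

theorem integral_Ioo_lt_integral_Ioi_of_forall_lt (hα : 0 < α) (hm : 0 < m)
    (h : ∀ t, 0 < t → t * exp t - exp t + 1 < (exp t - 1 - t) * exp ((α - m) * t)) :
    ∫ x in Ioo 0 m, gammaIntegrand α x < ∫ x in Ioi m, gammaIntegrand α x := by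
  rw [← image_pairLow hm, ← image_pairHigh hm]
  refine setIntegral_image_lt_setIntegral_image measurableSet_Ioi (by simp)
    (fun t ht => (hasDerivAt_pairLow (ne_of_gt ht)).hasDerivWithinAt) (injOn_pairLow hm)
    (fun t ht => (hasDerivAt_pairHigh (ne_of_gt ht)).hasDerivWithinAt) (injOn_pairHigh hm)
    ?_ ?_ fun t (ht : 0 < t) => ?_
  · rw [image_pairLow hm]
    exact (integrableOn_gammaIntegrand hα).mono_set Ioo_subset_Ioi_self
  · rw [image_pairHigh hm]
    exact (integrableOn_gammaIntegrand hα).mono_set (Ioi_subset_Ioi hm.le)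
  rw [abs_deriv_pairLow_mul_gammaIntegrand hm ht, abs_deriv_pairHigh_mul_gammaIntegrand hm ht]
  exact mul_lt_mul_of_pos_right (h t ht) (pairing_weight_pos hm ht)

theorem integral_Ioi_lt_integral_Ioo_of_forall_lt (hα : 0 < α) (hm : 0 < m)
    (h : ∀ t, 0 < t → (exp t - 1 - t) * exp ((α - m) * t) < t * exp t - exp t + 1) :
    ∫ x in Ioi m, gammaIntegrand α x < ∫ x in Ioo 0 m, gammaIntegrand α x := by
  rw [← image_pairLow hm, ← image_pairHigh hm]
  refine setIntegral_image_lt_setIntegral_image measurableSet_Ioi (by simp)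
    (fun t ht => (hasDerivAt_pairHigh (ne_of_gt ht)).hasDerivWithinAt) (injOn_pairHigh hm)
    (fun t ht => (hasDerivAt_pairLow (ne_of_gt ht)).hasDerivWithinAt) (injOn_pairLow hm)
    ?_ ?_ fun t (ht : 0 < t) => ?_
  · rw [image_pairHigh hm]
    exact (integrableOn_gammaIntegrand hα).mono_set (Ioi_subset_Ioi hm.le)
  · rw [image_pairLow hm]
    exact (integrableOn_gammaIntegrand hα).mono_set Ioo_subset_Ioi_self
  rw [abs_deriv_pairLow_mul_gammaIntegrand hm ht, abs_deriv_pairHigh_mul_gammaIntegrand hm ht]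
  exact mul_lt_mul_of_pos_right (h t ht) (pairing_weight_pos hm ht)

theorem lowerGamma_sub_third_lt_half (hα : 0 < α) : lowerGamma α (α - 1 / 3) < Gamma α / 2 := by
  rcases le_or_gt α (1 / 3) with hα₃ | hα₃
  · rw [lowerGamma, Ioc_eq_empty (by linarith), setIntegral_empty]
    linarith [Gamma_pos_of_pos hα]
  have hm : 0 < α - 1 / 3 := by linarith
  have hlt := integral_Ioo_lt_integral_Ioi_of_forall_lt hα hm fun t ht => by
    rw [show (α - (α - 1 / 3)) * t = t / 3 by ring]
    exact mul_exp_sub_exp_add_one_lt ht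
  rw [← lowerGamma_eq_integral_Ioo] at hlt
  linarith [lowerGamma_add_integral_Ioi hα hm.le]

theorem half_lt_lowerGamma_self (hα : 0 < α) : Gamma α / 2 < lowerGamma α α := by
  have hlt := integral_Ioi_lt_integral_Ioo_of_forall_lt hα hα fun t ht => by
    simpa using exp_sub_one_sub_lt ht
  rw [← lowerGamma_eq_integral_Ioo] at hlt
  linarith [lowerGamma_add_integral_Ioi hα hα.le]

end Comparison

theorem stmt_12_general (α ν : ℝ) (hα : 0 < α)
    (hν : ∫ t in Ioc 0 ν, t ^ (α - 1) * Real.exp (-t) = Real.Gamma α / 2) :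
    α - 1 / 3 < ν ∧ ν < α := by
  change lowerGamma α ν = Gamma α / 2 at hν
  constructor
  · by_contra! h
    exact (lowerGamma_sub_third_lt_half hα).not_ge (hν ▸ lowerGamma_mono hα h)
  · by_contra! h
    exact (half_lt_lowerGamma_self hα).not_ge (hν ▸ lowerGamma_mono hα h)

/-- Chen–Rubin bounds: the median `ν(α)` of the Gamma(α,1) distribution
satisfies `α - 1/3 < ν(α) < α`. -/
theorem stmt_12 (α ν : ℝ) (hα : 0 < α) (hν_pos : 0 < ν)
    (hν : ∫ t in Ioc 0 ν, t ^ (α - 1) * Real.exp (-t) = Real.Gamma α / 2) :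
    α - 1 / 3 < ν ∧ ν < α :=
  stmt_12_general α ν hα hν
end

section
/- Let X₁, X₂ be independent with Xᵢ/θᵢ having density αᵢ z^{αᵢ−1} on (0,1) (power distributions), αᵢ > 0 known, scales 0 < θ₁ ≤ θ₂. Let Z₁ = X₁/θ₁, D = X₂/X₁, λ = θ₂/θ₁ ≥ 1. Then for t > 0 the conditional density of Z₁ given D = t is (α₁+α₂)s^{α₁+α₂−1}/(min{1, λ/t})^{α₁+α₂} on 0 < s < min{1, λ/t}, with median m_λ(t) = 2^{−1/(α₁+α₂)}·min{1, λ/t}, which is nondecreasing in λ ∈ [1,∞). -/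
open MeasureTheory Set Real

/-- Example 4.1.2: for independent power distributions, the conditional density
of `Z₁ = X₁/θ₁` given `D = X₂/X₁ = t` is
`(α₁+α₂) s^{α₁+α₂-1} / (min 1 (λ/t))^{α₁+α₂}` on `0 < s < min 1 (λ/t)`; its
median `m_λ(t) = 2^{-1/(α₁+α₂)} min 1 (λ/t)` is nondecreasing in `λ ≥ 1`. -/
theorem stmt_13 (α₁ α₂ : ℝ) (hα₁ : 0 < α₁) (hα₂ : 0 < α₂)
    (f : ℝ → ℝ → ℝ)
    (hf : ∀ z₁ z₂ : ℝ, f z₁ z₂ =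
      if 0 < z₁ ∧ z₁ < 1 ∧ 0 < z₂ ∧ z₂ < 1 then
        α₁ * α₂ * z₁ ^ (α₁ - 1) * z₂ ^ (α₂ - 1) else 0)
    (m : ℝ → ℝ → ℝ)
    (hm : ∀ lam t, m lam t = (2 : ℝ) ^ (-1 / (α₁ + α₂)) * min 1 (lam / t)) :
    (∀ lam : ℝ, 1 ≤ lam → ∀ t : ℝ, 0 < t → ∀ s : ℝ, 0 < s → s < min 1 (lam / t) →
      (s * f s (s * t / lam)) / (∫ y in Ioi 0, y * f y (y * t / lam)) =
        (α₁ + α₂) * s ^ (α₁ + α₂ - 1) / (min 1 (lam / t)) ^ (α₁ + α₂)) ∧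
    (∀ lam : ℝ, 1 ≤ lam → ∀ t : ℝ, 0 < t →
      ∫ s in Ioc 0 (m lam t), s * f s (s * t / lam) =
        (1 / 2) * ∫ s in Ioi 0, s * f s (s * t / lam)) ∧
    (∀ t : ℝ, 0 < t → MonotoneOn (fun lam => m lam t) (Ici 1)) := by
  set A : ℝ := α₁ + α₂ with hA
  have hApos : 0 < A := by positivity
  -- pointwise value of the integrand
  have hpt : ∀ lam : ℝ, 1 ≤ lam → ∀ t : ℝ, 0 < t → ∀ y : ℝ, 0 < y →
      y < min 1 (lam / t) →
      y * f y (y * t / lam) = α₁ * α₂ * (t / lam) ^ (α₂ - 1) * y ^ (A - 1) := by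
    intro lam hlam t ht y hy hyc
    have hlam0 : 0 < lam := lt_of_lt_of_le one_pos hlam
    have h1 : y < 1 := lt_of_lt_of_le hyc (min_le_left _ _)
    have h2 : y < lam / t := lt_of_lt_of_le hyc (min_le_right _ _)
    have h3 : 0 < y * t / lam := by positivity
    have h4 : y * t / lam < 1 := by
      rw [div_lt_one hlam0]
      rw [lt_div_iff₀ ht] at h2
      linarith
    rw [hf]
    rw [if_pos ⟨hy, h1, h3, h4⟩]
    have hytl : y * t / lam = y * (t / lam) := by ring
    rw [hytl, Real.mul_rpow hy.le (by positivity)]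
    have hy3 : y ^ (A - 1) = y * (y ^ (α₁ - 1) * y ^ (α₂ - 1)) := by
      rw [show A - 1 = 1 + ((α₁ - 1) + (α₂ - 1)) by rw [hA]; ring,
        Real.rpow_add hy, Real.rpow_add hy, Real.rpow_one]
    rw [hy3]; ring
  -- vanishing outside
  have hzero : ∀ lam : ℝ, 1 ≤ lam → ∀ t : ℝ, 0 < t → ∀ y : ℝ,
      y ∈ Ioi (0:ℝ) \ Ioc 0 (min 1 (lam / t)) → y * f y (y * t / lam) = 0 := by
    intro lam hlam t ht y hy
    have hlam0 : 0 < lam := lt_of_lt_of_le one_pos hlam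
    obtain ⟨hy0, hy1⟩ := hy
    have hy0' : 0 < y := hy0
    have hyc : min 1 (lam / t) < y := by
      by_contra h
      exact hy1 ⟨hy0', le_of_not_gt h⟩
    rw [hf]
    rw [if_neg, mul_zero]
    rintro ⟨-, h1, -, h4⟩
    have h2 : y < lam / t := by
      rw [lt_div_iff₀ ht]
      have := (div_lt_one hlam0).mp h4
      linarith
    exact absurd (lt_min h1 h2) (not_lt.mpr hyc.le)
  -- integral over Ioc 0 b for 0 < b ≤ min 1 (lam/t)
  have key : ∀ lam : ℝ, 1 ≤ lam → ∀ t : ℝ, 0 < t → ∀ b : ℝ, 0 < b →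
      b ≤ min 1 (lam / t) →
      ∫ y in Ioc 0 b, y * f y (y * t / lam) =
        α₁ * α₂ * (t / lam) ^ (α₂ - 1) * (b ^ A / A) := by
    intro lam hlam t ht b hb hbc
    rw [integral_Ioc_eq_integral_Ioo]
    rw [setIntegral_congr_fun measurableSet_Ioo
      (g := fun y => α₁ * α₂ * (t / lam) ^ (α₂ - 1) * y ^ (A - 1))
      (fun y hy => hpt lam hlam t ht y hy.1 (lt_of_lt_of_le hy.2 hbc))]
    rw [← integral_Ioc_eq_integral_Ioo, ← intervalIntegral.integral_of_le hb.le,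
      intervalIntegral.integral_const_mul,
      integral_rpow (Or.inl (by linarith : (-1:ℝ) < A - 1))]
    rw [show A - 1 + 1 = A by ring, Real.zero_rpow (ne_of_gt hApos)]
    ring
  -- total integral
  have hIoi : ∀ lam : ℝ, 1 ≤ lam → ∀ t : ℝ, 0 < t →
      ∫ y in Ioi 0, y * f y (y * t / lam) =
        α₁ * α₂ * (t / lam) ^ (α₂ - 1) * ((min 1 (lam / t)) ^ A / A) := by
    intro lam hlam t ht
    have hlam0 : 0 < lam := lt_of_lt_of_le one_pos hlam
    have hc : 0 < min 1 (lam / t) := lt_min one_pos (by positivity)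
    rw [setIntegral_eq_of_subset_of_forall_diff_eq_zero measurableSet_Ioi
      (Ioc_subset_Ioi_self) (hzero lam hlam t ht)]
    exact key lam hlam t ht _ hc le_rfl
  refine ⟨?_, ?_, ?_⟩
  · intro lam hlam t ht s hs hsc
    have hlam0 : 0 < lam := lt_of_lt_of_le one_pos hlam
    have hc : 0 < min 1 (lam / t) := lt_min one_pos (by positivity)
    rw [hIoi lam hlam t ht, hpt lam hlam t ht s hs hsc]
    have hK : (0:ℝ) < α₁ * α₂ * (t / lam) ^ (α₂ - 1) := by positivity
    have hcA : (0:ℝ) < (min 1 (lam / t)) ^ A := Real.rpow_pos_of_pos hc A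
    field_simp
  · intro lam hlam t ht
    have hlam0 : 0 < lam := lt_of_lt_of_le one_pos hlam
    have hc : 0 < min 1 (lam / t) := lt_min one_pos (by positivity)
    have hr : (0:ℝ) < (2:ℝ) ^ (-1 / A) := Real.rpow_pos_of_pos two_pos _
    have hr1 : (2:ℝ) ^ (-1 / A) ≤ 1 :=
      Real.rpow_le_one_of_one_le_of_nonpos one_le_two
        (by rw [neg_div]; exact neg_nonpos.mpr (by positivity))
    have hmpos : 0 < m lam t := by rw [hm]; positivity
    have hmle : m lam t ≤ min 1 (lam / t) := by
      rw [hm]; exact mul_le_of_le_one_left hc.le hr1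
    rw [hIoi lam hlam t ht, key lam hlam t ht _ hmpos hmle, hm]
    have hmA : ((2:ℝ) ^ (-1 / A) * min 1 (lam / t)) ^ A
        = (1/2) * (min 1 (lam / t)) ^ A := by
      rw [Real.mul_rpow hr.le hc.le, ← Real.rpow_mul (by norm_num : (0:ℝ) ≤ 2),
        div_mul_cancel₀ _ (ne_of_gt hApos), Real.rpow_neg_one]
      norm_num
    rw [hmA]; ring
  · intro t ht a _ b _ hab
    simp only [hm]
    have : min 1 (a / t) ≤ min 1 (b / t) :=
      min_le_min le_rfl (by gcongr)
    exact mul_le_mul_of_nonneg_left this (Real.rpow_nonneg (by norm_num) _)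
end
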